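/- Let Δ be a fan in a lattice N and let L ⊆ N be a primitive sublattice. Then there exists a map of fans P : (N,Δ) → (Ñ,Δ̃) with L ⊆ ker(P) satisfying the following universal property: for every map of fans F : (N,Δ) → (N',Δ') with L ⊆ ker(F) there is a unique map of fans F̃ : (Ñ,Δ̃) → (N',Δ') with F = F̃ ∘ P. -/

import Mathlib

open Set

/-- The coercion of an integral vector in `ℤ^n` to a real vector in `ℝ^n`. -/
def toR {n : ℕ} (v : Fin n → ℤ) : Fin n → ℝ := fun i => (v i : ℝ)

/-- The scalar extension `F^ℝ : N^ℝ → N'^ℝ` of a `ℤ`-linear map `F : N → N'`,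
where `N = ℤ^n`, `N' = ℤ^m`. -/
noncomputable def extR {n m : ℕ} (F : (Fin n → ℤ) →ₗ[ℤ] (Fin m → ℤ)) :
    (Fin n → ℝ) →ₗ[ℝ] (Fin m → ℝ) :=
  (Matrix.of fun i j => ((F (Pi.single j 1)) i : ℝ)).mulVecLin

/-- A convex cone: a subset containing `0` that is closed under addition and
under multiplication by nonnegative scalars. -/
def IsCone {V : Type*} [AddCommGroup V] [Module ℝ V] (σ : Set V) : Prop :=
  0 ∈ σ ∧ (∀ x ∈ σ, ∀ y ∈ σ, x + y ∈ σ) ∧ ∀ c : ℝ, 0 ≤ c → ∀ x ∈ σ, c • x ∈ σ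

/-- The convex-cone hull of a set: the smallest convex cone containing it. -/
def coneHull {V : Type*} [AddCommGroup V] [Module ℝ V] (s : Set V) : Set V :=
  ⋂₀ {σ | IsCone σ ∧ s ⊆ σ}

/-- A rational polyhedral cone in `ℝ^n`: a convex cone generated by finitely
many vectors of the lattice `ℤ^n`. -/
def IsRatCone {n : ℕ} (σ : Set (Fin n → ℝ)) : Prop :=
  ∃ s : Finset (Fin n → ℤ), σ = coneHull (toR '' ↑s)

/-- A cone is strictly convex if it contains no nonzero linear subspace,
equivalently `σ ∩ (-σ) = {0}`. -/
def IsStrictlyConvexCone {V : Type*} [AddCommGroup V] [Module ℝ V] (σ : Set V) : Prop :=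
  ∀ x ∈ σ, -x ∈ σ → x = 0

/-- `τ` is a face of the convex cone `σ`: a subcone such that whenever
`x, y ∈ σ` and `x + y ∈ τ`, then `x, y ∈ τ`. -/
def IsFaceOf {V : Type*} [AddCommGroup V] [Module ℝ V] (τ σ : Set V) : Prop :=
  IsCone τ ∧ τ ⊆ σ ∧ ∀ x ∈ σ, ∀ y ∈ σ, x + y ∈ τ → x ∈ τ ∧ y ∈ τ

/-- A system of `N`-cones: a finite set of rational polyhedral cones in `ℝ^n`. -/
def IsConeSystem {n : ℕ} (S : Set (Set (Fin n → ℝ))) : Prop :=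
  S.Finite ∧ ∀ σ ∈ S, IsRatCone σ

/-- A quasifan: a finite set of rational polyhedral cones, closed under taking
faces, in which any two cones intersect in a common face. -/
def IsQuasifan {n : ℕ} (Δ : Set (Set (Fin n → ℝ))) : Prop :=
  IsConeSystem Δ ∧ (∀ σ ∈ Δ, ∀ τ, IsFaceOf τ σ → τ ∈ Δ) ∧
    ∀ σ ∈ Δ, ∀ σ' ∈ Δ, IsFaceOf (σ ∩ σ') σ

/-- A fan: a quasifan all of whose cones are strictly convex. -/
def IsFan {n : ℕ} (Δ : Set (Set (Fin n → ℝ))) : Prop :=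
  IsQuasifan Δ ∧ ∀ σ ∈ Δ, IsStrictlyConvexCone σ

/-- `F` defines a map of systems of cones (in particular of (quasi-)fans):
every cone of `S` is mapped by `F^ℝ` into some cone of `S'`. -/
def IsConeMap {n m : ℕ} (F : (Fin n → ℤ) →ₗ[ℤ] (Fin m → ℤ))
    (S : Set (Set (Fin n → ℝ))) (S' : Set (Set (Fin m → ℝ))) : Prop :=
  ∀ σ ∈ S, ∃ τ ∈ S', extR F '' σ ⊆ τ

/-- A sublattice `L ⊆ ℤ^n` is primitive if the quotient `ℤ^n/L` is
torsion-free. -/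
def IsPrimitive {n : ℕ} (L : Submodule ℤ (Fin n → ℤ)) : Prop :=
  ∀ (v : Fin n → ℤ) (k : ℤ), k ≠ 0 → k • v ∈ L → v ∈ L

/-- The set of maximal cones of a system of cones. -/
def maxCones {n : ℕ} (Δ : Set (Set (Fin n → ℝ))) : Set (Set (Fin n → ℝ)) :=
  {σ ∈ Δ | ∀ τ ∈ Δ, σ ⊆ τ → σ = τ}

/-- `ρ` is a ray (one-dimensional cone) of `Δ`. -/
def IsRay {n : ℕ} (Δ : Set (Set (Fin n → ℝ))) (ρ : Set (Fin n → ℝ)) : Prop :=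
  ρ ∈ Δ ∧ Module.finrank ℝ (Submodule.span ℝ ρ) = 1

/-- `Δt`, together with the surjection `P : ℤ^n → ℤ^m` onto the quotient of
`ℤ^n` by the primitive sublattice `L̂ = ker P ⊇ L`, is the quotient fan of the
system of cones `S` by `L`: the projection `P` defines a map of systems of
cones from `S` to the fan `Δt` and every map of systems of cones `F` from `S`
to a fan with `F(L) = 0` factors through `P` via a map of fans. -/
def IsQuotientFan {n m : ℕ} (S : Set (Set (Fin n → ℝ))) (L : Submodule ℤ (Fin n → ℤ))
    (P : (Fin n → ℤ) →ₗ[ℤ] (Fin m → ℤ)) (Δt : Set (Set (Fin m → ℝ))) : Prop :=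
  Function.Surjective P ∧ L ≤ LinearMap.ker P ∧ IsPrimitive (LinearMap.ker P) ∧
  IsFan Δt ∧ IsConeMap P S Δt ∧
  ∀ (k : ℕ) (F : (Fin n → ℤ) →ₗ[ℤ] (Fin k → ℤ)) (Δ' : Set (Set (Fin k → ℝ))),
    IsFan Δ' → IsConeMap F S Δ' → L ≤ LinearMap.ker F →
    ∃ Ft : (Fin m → ℤ) →ₗ[ℤ] (Fin k → ℤ), IsConeMap Ft Δt Δ' ∧ F = Ft.comp P
section Cones

variable {V : Type*} [AddCommGroup V] [Module ℝ V]

lemma IsCone.zero_mem {σ : Set V} (h : IsCone σ) : (0:V) ∈ σ := h.1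
lemma IsCone.add_mem {σ : Set V} (h : IsCone σ) {x y : V} (hx : x ∈ σ) (hy : y ∈ σ) :
    x + y ∈ σ := h.2.1 x hx y hy
lemma IsCone.smul_mem {σ : Set V} (h : IsCone σ) {c : ℝ} (hc : 0 ≤ c) {x : V} (hx : x ∈ σ) :
    c • x ∈ σ := h.2.2 c hc x hx

lemma isCone_coneHull (s : Set V) : IsCone (coneHull s) := by
  refine ⟨?_, ?_, ?_⟩
  · exact fun σ hσ => hσ.1.1
  · intro x hx y hy σ hσ
    exact hσ.1.2.1 x (hx σ hσ) y (hy σ hσ)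
  · intro c hc x hx σ hσ
    exact hσ.1.2.2 c hc x (hx σ hσ)

lemma subset_coneHull (s : Set V) : s ⊆ coneHull s := by
  intro x hx σ hσ; exact hσ.2 hx

lemma coneHull_min {s σ : Set V} (hσ : IsCone σ) (hs : s ⊆ σ) : coneHull s ⊆ σ :=
  fun _ hx => hx σ ⟨hσ, hs⟩

lemma coneHull_mono {s t : Set V} (h : s ⊆ t) : coneHull s ⊆ coneHull t :=
  coneHull_min (isCone_coneHull t) (h.trans (subset_coneHull t))

lemma IsCone.coneHull_eq {σ : Set V} (h : IsCone σ) : coneHull σ = σ :=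
  le_antisymm (coneHull_min h le_rfl) (subset_coneHull σ)

lemma IsCone.inter {σ τ : Set V} (hσ : IsCone σ) (hτ : IsCone τ) : IsCone (σ ∩ τ) :=
  ⟨⟨hσ.1, hτ.1⟩, fun x hx y hy => ⟨hσ.add_mem hx.1 hy.1, hτ.add_mem hx.2 hy.2⟩,
    fun c hc x hx => ⟨hσ.smul_mem hc hx.1, hτ.smul_mem hc hx.2⟩⟩

lemma IsCone.sum_mem {σ : Set V} (h : IsCone σ) {ι : Type*} {s : Finset ι} {f : ι → V}
    (hf : ∀ i ∈ s, f i ∈ σ) : ∑ i ∈ s, f i ∈ σ := by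
  classical
  induction s using Finset.induction_on with
  | empty => simpa using h.zero_mem
  | insert _ _ hx ih =>
    rw [Finset.sum_insert hx]
    exact h.add_mem (hf _ (Finset.mem_insert_self _ _))
      (ih fun i hi => hf _ (Finset.mem_insert_of_mem hi))

lemma IsCone.preimage {W : Type*} [AddCommGroup W] [Module ℝ W] (f : V →ₗ[ℝ] W)
    {σ : Set W} (h : IsCone σ) : IsCone (f ⁻¹' σ) := by
  refine ⟨?_, ?_, ?_⟩
  · simp [Set.mem_preimage, map_zero, h.zero_mem]
  · intro x hx y hy; simp only [Set.mem_preimage, map_add]; exact h.add_mem hx hy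
  · intro c hc x hx; simp only [Set.mem_preimage, map_smul]; exact h.smul_mem hc hx

lemma IsCone.image {W : Type*} [AddCommGroup W] [Module ℝ W] (f : V →ₗ[ℝ] W)
    {σ : Set V} (h : IsCone σ) : IsCone (f '' σ) := by
  refine ⟨⟨0, h.zero_mem, map_zero f⟩, ?_, ?_⟩
  · rintro _ ⟨x, hx, rfl⟩ _ ⟨y, hy, rfl⟩
    exact ⟨x + y, h.add_mem hx hy, map_add f x y⟩
  · rintro c hc _ ⟨x, hx, rfl⟩
    exact ⟨c • x, h.smul_mem hc hx, map_smul f c x⟩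

lemma map_coneHull {W : Type*} [AddCommGroup W] [Module ℝ W] (f : V →ₗ[ℝ] W)
    (s : Set V) : f '' coneHull s = coneHull (f '' s) := by
  apply le_antisymm
  · rintro _ ⟨x, hx, rfl⟩
    have : coneHull s ⊆ f ⁻¹' coneHull (f '' s) :=
      coneHull_min ((isCone_coneHull _).preimage f)
        (fun y hy => subset_coneHull _ ⟨y, hy, rfl⟩)
    exact this hx
  · exact coneHull_min ((isCone_coneHull s).image f) (Set.image_mono (subset_coneHull s))

/-- Membership in the cone hull of a finite set. -/
lemma mem_coneHull_finset {S : Finset V} {x : V} :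
    x ∈ coneHull (↑S : Set V) ↔ ∃ c : V → ℝ, (∀ v, 0 ≤ c v) ∧ x = ∑ v ∈ S, c v • v := by
  classical
  constructor
  · intro hx
    refine hx {y | ∃ c : V → ℝ, (∀ v, 0 ≤ c v) ∧ y = ∑ v ∈ S, c v • v} ⟨⟨?_, ?_, ?_⟩, ?_⟩
    · exact ⟨0, fun v => le_rfl, by simp⟩
    · rintro _ ⟨c, hc, rfl⟩ _ ⟨d, hd, rfl⟩
      exact ⟨c + d, fun v => add_nonneg (hc v) (hd v), by
        simp [add_smul, Finset.sum_add_distrib]⟩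
    · rintro t ht _ ⟨c, hc, rfl⟩
      exact ⟨fun v => t * c v, fun v => mul_nonneg ht (hc v), by
        simp [Finset.smul_sum, mul_smul]⟩
    · intro v hv
      refine ⟨fun w => if w = v then 1 else 0, fun w => by positivity, ?_⟩
      have : ∀ w ∈ S, (if w = v then (1:ℝ) else 0) • w = if w = v then v else 0 := by
        intro w hw; split <;> simp_all
      rw [Finset.sum_congr rfl this, Finset.sum_ite_eq' S v (fun _ => v)]
      simp only [if_pos (by exact_mod_cast hv : v ∈ S)]
  · rintro ⟨c, hc, rfl⟩
    exact (isCone_coneHull _).sum_mem fun v hv =>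
      (isCone_coneHull _).smul_mem (hc v) (subset_coneHull _ hv)

end Cones
section Faces

variable {V : Type*} [AddCommGroup V] [Module ℝ V]

attribute [local instance] Classical.propDecidable

lemma IsFaceOf.isCone {τ σ : Set V} (h : IsFaceOf τ σ) : IsCone τ := h.1
lemma IsFaceOf.subset {τ σ : Set V} (h : IsFaceOf τ σ) : τ ⊆ σ := h.2.1

lemma IsCone.faceOf_self {σ : Set V} (h : IsCone σ) : IsFaceOf σ σ :=
  ⟨h, le_rfl, fun x hx y hy _ => ⟨hx, hy⟩⟩

lemma IsFaceOf.trans {υ τ σ : Set V} (h1 : IsFaceOf υ τ) (h2 : IsFaceOf τ σ) :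
    IsFaceOf υ σ := by
  refine ⟨h1.1, h1.subset.trans h2.subset, fun x hx y hy hxy => ?_⟩
  have h' := h2.2.2 x hx y hy (h1.subset hxy)
  exact h1.2.2 x h'.1 y h'.2 hxy

/-- A face of `coneHull ↑S` is the cone hull of the generators it contains. -/
lemma IsFaceOf.eq_coneHull_filter {S : Finset V} {G : Set V}
    (h : IsFaceOf G (coneHull (↑S : Set V))) :
    G = coneHull (↑(S.filter (fun v => v ∈ G)) : Set V) := by
  classical
  apply le_antisymm
  · intro x hx
    obtain ⟨c, hc, rfl⟩ := mem_coneHull_finset.mp (h.subset hx)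
    have key : ∀ v ∈ S, c v ≠ 0 → v ∈ G := by
      intro v hv hcv
      have h1 : c v • v ∈ coneHull (↑S : Set V) :=
        (isCone_coneHull _).smul_mem (hc v) (subset_coneHull _ hv)
      have h2 : ∑ w ∈ S.erase v, c w • w ∈ coneHull (↑S : Set V) :=
        (isCone_coneHull _).sum_mem fun w hw =>
          (isCone_coneHull _).smul_mem (hc w)
            (subset_coneHull _ (Finset.mem_of_mem_erase hw))
      have hsplit : c v • v + ∑ w ∈ S.erase v, c w • w = ∑ w ∈ S, c w • w :=
        Finset.add_sum_erase S (fun w => c w • w) hv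
      have := h.2.2 _ h1 _ h2 (by rw [hsplit]; exact hx)
      have hmem : c v • v ∈ G := this.1
      have : (c v)⁻¹ • (c v • v) ∈ G :=
        h.isCone.smul_mem (inv_nonneg.mpr (hc v)) hmem
      rwa [inv_smul_smul₀ hcv] at this
    have : ∑ v ∈ S, c v • v = ∑ v ∈ S.filter (fun v => v ∈ G), c v • v := by
      rw [← Finset.sum_filter_add_sum_filter_not S (fun v => v ∈ G)]
      have : ∑ v ∈ S.filter (fun v => ¬ v ∈ G), c v • v = 0 := by
        apply Finset.sum_eq_zero
        intro v hv
        rcases Finset.mem_filter.mp hv with ⟨hvS, hvG⟩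
        have : c v = 0 := by_contra fun hne => hvG (key v hvS hne)
        simp [this]
      rw [this, add_zero]
    rw [this]
    exact (isCone_coneHull _).sum_mem fun v hv =>
      (isCone_coneHull _).smul_mem (hc v) (subset_coneHull _ hv)
  · exact coneHull_min h.isCone (fun v hv => (Finset.mem_filter.mp hv).2)

lemma finite_faces (S : Finset V) : {G : Set V | IsFaceOf G (coneHull (↑S : Set V))}.Finite := by
  classical
  apply Set.Finite.subset (Set.Finite.image (fun T : Finset V => coneHull (↑T : Set V))
    (S.powerset : Finset (Finset V)).finite_toSet)
  intro G hG
  exact ⟨S.filter (fun v => v ∈ G), Finset.mem_powerset.mpr (Finset.filter_subset _ _), hG.eq_coneHull_filter.symm⟩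

lemma IsFaceOf.strictlyConvex {τ σ : Set V} (h : IsFaceOf τ σ)
    (hσ : IsStrictlyConvexCone σ) : IsStrictlyConvexCone τ :=
  fun x hx hnx => hσ x (h.subset hx) (h.subset hnx)

/-- intersection of faces of two cones whose intersection is a face of each. -/
lemma face_inter_face {σ σ' G G' : Set V} (hG : IsFaceOf G σ) (hG' : IsFaceOf G' σ')
    (hint : IsFaceOf (σ ∩ σ') σ) : IsFaceOf (G ∩ G') G := by
  refine ⟨hG.isCone.inter hG'.isCone, Set.inter_subset_left, fun x hx y hy hxy => ?_⟩
  have hxσ : x ∈ σ := hG.subset hx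
  have hyσ : y ∈ σ := hG.subset hy
  have hsum : x + y ∈ σ ∩ σ' := ⟨hG.subset (hG.isCone.add_mem hx hy), hG'.subset hxy.2⟩
  have hx' := hint.2.2 x hxσ y hyσ hsum
  have hxy' := hG'.2.2 x hx'.1.2 y hx'.2.2 hxy.2
  exact ⟨⟨hx, hxy'.1⟩, hy, hxy'.2⟩

/-- The lineality part `σ ∩ (-σ)` is a face of `σ`. -/
lemma lineality_face {σ : Set V} (h : IsCone σ) : IsFaceOf (σ ∩ (fun x => -x) ⁻¹' σ) σ := by
  constructor
  · refine ⟨⟨h.zero_mem, by simpa using h.zero_mem⟩, ?_, ?_⟩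
    · rintro x ⟨hx, hnx⟩ y ⟨hy, hny⟩
      exact ⟨h.add_mem hx hy, by
        simp only [Set.mem_preimage] at *
        rw [neg_add, add_comm] at *
        exact h.add_mem hny hnx⟩
    · rintro c hc x ⟨hx, hnx⟩
      exact ⟨h.smul_mem hc hx, by simpa [smul_neg] using h.smul_mem hc hnx⟩
  refine ⟨Set.inter_subset_left, fun x hx y hy hxy => ?_⟩
  have hnx : -x ∈ σ := by
    have : -x = y + (-(x+y)) := by abel
    rw [this]; exact h.add_mem hy hxy.2
  have hny : -y ∈ σ := by
    have : -y = x + (-(x+y)) := by abel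
    rw [this]; exact h.add_mem hx hxy.2
  exact ⟨⟨hx, hnx⟩, hy, hny⟩

lemma coneHull_zero_sub {s : Set V} (hs : s ⊆ {0}) : coneHull s ⊆ {(0:V)} := by
  apply coneHull_min _ hs
  refine ⟨rfl, ?_, ?_⟩
  · rintro x (rfl : x = 0) y (rfl : y = 0); simp
  · rintro c _ x (rfl : x = 0); simp

end Faces
section ExtR

lemma toR_injective {n : ℕ} : Function.Injective (toR (n := n)) := by
  intro a b h
  funext i
  have := congrFun h i
  simpa [toR] using this

@[simp] lemma toR_zero {n : ℕ} : toR (0 : Fin n → ℤ) = 0 := by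
  funext i; simp [toR]

lemma extR_toR {n m : ℕ} (F : (Fin n → ℤ) →ₗ[ℤ] (Fin m → ℤ)) (v : Fin n → ℤ) :
    extR F (toR v) = toR (F v) := by
  funext i
  have hv : F v = ∑ j, v j • F (Pi.single j 1) := by
    conv_lhs => rw [show v = ∑ j, v j • Pi.single j (1:ℤ) by
      funext k; simp [Pi.single_apply, Finset.sum_apply]]
    rw [map_sum]
    exact Finset.sum_congr rfl fun j _ => F.map_smul (v j) _
  simp only [extR, Matrix.mulVecLin_apply, Matrix.mulVec, dotProduct, Matrix.of_apply,
    toR, hv, Finset.sum_apply, Pi.smul_apply, smul_eq_mul]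
  push_cast
  exact Finset.sum_congr rfl fun j _ => mul_comm _ _

lemma extR_comp {n m k : ℕ} (A : (Fin m → ℤ) →ₗ[ℤ] (Fin k → ℤ))
    (B : (Fin n → ℤ) →ₗ[ℤ] (Fin m → ℤ)) :
    extR (A.comp B) = (extR A).comp (extR B) := by
  apply (Pi.basisFun ℝ (Fin n)).ext
  intro j
  have h1 : (Pi.basisFun ℝ (Fin n)) j = toR (Pi.single j 1) := by
    funext i; simp [toR, Pi.single_apply, Pi.basisFun_apply]
  rw [h1, LinearMap.comp_apply, extR_toR, extR_toR, extR_toR]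
  rfl

end ExtR
section ZMod

/-- Factor a map through a surjection whose kernel it kills. -/
lemma exists_factor {n m k : ℕ} (P : (Fin n → ℤ) →ₗ[ℤ] (Fin m → ℤ))
    (hs : Function.Surjective P) (F : (Fin n → ℤ) →ₗ[ℤ] (Fin k → ℤ))
    (hk : LinearMap.ker P ≤ LinearMap.ker F) :
    ∃ Ft : (Fin m → ℤ) →ₗ[ℤ] (Fin k → ℤ), F = Ft.comp P := by
  classical
  set b := Pi.basisFun ℤ (Fin m)
  let s : (Fin m → ℤ) →ₗ[ℤ] (Fin n → ℤ) :=
    b.constr ℕ (fun i => Classical.choose (hs (Pi.single i 1)))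
  have hPs : P.comp s = LinearMap.id := by
    apply b.ext
    intro i
    simp only [LinearMap.comp_apply, LinearMap.id_apply, s]
    rw [Module.Basis.constr_basis]
    rw [Classical.choose_spec (hs (Pi.single i 1))]
    simp [b, Pi.basisFun_apply]
  refine ⟨F.comp s, ?_⟩
  apply LinearMap.ext
  intro x
  simp only [LinearMap.comp_apply]
  have hPsx : P (s (P x)) = P x := by
    have := LinearMap.congr_fun hPs (P x)
    simpa using this
  have hker : s (P x) - x ∈ LinearMap.ker P := by
    rw [LinearMap.mem_ker, map_sub, hPsx, sub_self]
  have := hk hker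
  rw [LinearMap.mem_ker, map_sub, sub_eq_zero] at this
  exact this.symm

/-- Quotient of `ℤ^r` by a saturated submodule is (isomorphic to) some `ℤ^m`. -/
lemma exists_quot_sat {r : ℕ} (K : Submodule ℤ (Fin r → ℤ))
    (hsat : ∀ (v : Fin r → ℤ) (c : ℤ), c ≠ 0 → c • v ∈ K → v ∈ K) :
    ∃ (m : ℕ) (P : (Fin r → ℤ) →ₗ[ℤ] (Fin m → ℤ)),
      Function.Surjective P ∧ LinearMap.ker P = K ∧ (K ≠ ⊥ → m < r) := by
  classical
  let Q := (Fin r → ℤ) ⧸ K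
  haveI : NoZeroSMulDivisors ℤ Q := by
    constructor
    intro c x h
    by_contra hcon
    push_neg at hcon
    obtain ⟨hc, hx⟩ := hcon
    obtain ⟨v, rfl⟩ := Submodule.Quotient.mk_surjective K x
    apply hx
    rw [Submodule.Quotient.mk_eq_zero]
    apply hsat v c hc
    rw [← Submodule.Quotient.mk_smul] at h
    exact (Submodule.Quotient.mk_eq_zero _).mp h
  haveI : Module.Finite ℤ Q := Module.Finite.quotient ℤ K
  haveI : Module.Free ℤ Q := Module.free_of_finite_type_torsion_free'
  let ι := Module.Free.ChooseBasisIndex ℤ Q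
  let bQ : Module.Basis ι ℤ Q := Module.Free.chooseBasis ℤ Q
  let m := Fintype.card ι
  let e : Q ≃ₗ[ℤ] (Fin m → ℤ) :=
    bQ.equivFun.trans (LinearEquiv.funCongrLeft ℤ ℤ (Fintype.equivFin ι).symm)
  let P : (Fin r → ℤ) →ₗ[ℤ] (Fin m → ℤ) := e.toLinearMap.comp K.mkQ
  have hsurj : Function.Surjective P :=
    e.surjective.comp (Submodule.Quotient.mk_surjective K)
  have hker : LinearMap.ker P = K := by
    ext x
    simp only [P, LinearMap.mem_ker, LinearMap.comp_apply, LinearEquiv.coe_coe,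
      EmbeddingLike.map_eq_zero_iff]
    rw [← Submodule.Quotient.mk_eq_zero]
    rfl
  refine ⟨m, P, hsurj, hker, ?_⟩
  intro hK
  by_contra hlt
  push_neg at hlt
  have hrm : r ≤ m := hlt
  let π : (Fin m → ℤ) →ₗ[ℤ] (Fin r → ℤ) :=
    LinearMap.funLeft ℤ ℤ (Fin.castLE hrm)
  have hπ : Function.Surjective π :=
    LinearMap.funLeft_surjective_of_injective ℤ ℤ _ (Fin.castLE_injective hrm)
  have hendo : Function.Injective (π.comp P) :=
    OrzechProperty.injective_of_surjective_endomorphism (π.comp P) (hπ.comp hsurj)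
  apply hK
  rw [← hker]
  ext x
  simp only [LinearMap.mem_ker, Submodule.mem_bot]
  constructor
  · intro hx
    have : (π.comp P) x = 0 := by simp [LinearMap.comp_apply, hx]
    have := hendo (by simpa using this : (π.comp P) x = (π.comp P) 0)
    exact this
  · rintro rfl; simp

end ZMod
section MainConstr

attribute [local instance] Classical.propDecidable

variable {n m : ℕ}

/-- The cone generated by the generators a state assigns to `σ`. -/
def coneOf (A : Set (Fin n → ℝ) → Finset (Fin m → ℤ)) (σ : Set (Fin n → ℝ)) :
    Set (Fin m → ℝ) :=
  coneHull (toR '' ↑(A σ))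

/-- `x` (a generator of some cone of the current state) is absorbed into `σ'`. -/
def absorbCond (Δ : Set (Set (Fin n → ℝ))) (A : Set (Fin n → ℝ) → Finset (Fin m → ℤ))
    (σ' : Set (Fin n → ℝ)) (x : Fin m → ℤ) : Prop :=
  ∃ σ ∈ Δ, x ∈ A σ ∧ ∃ y ∈ coneOf A σ, toR x + y ∈ coneOf A σ'

/-- One absorption step of the closure process. -/
noncomputable def stepFn (Δ : Set (Set (Fin n → ℝ))) (pool : Finset (Fin m → ℤ))
    (A : Set (Fin n → ℝ) → Finset (Fin m → ℤ)) :
    Set (Fin n → ℝ) → Finset (Fin m → ℤ) :=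
  fun σ' => if σ' ∈ Δ then A σ' ∪ pool.filter (absorbCond Δ A σ') else A σ'

lemma stepFn_mono (Δ : Set (Set (Fin n → ℝ))) (pool : Finset (Fin m → ℤ))
    (A : Set (Fin n → ℝ) → Finset (Fin m → ℤ)) (σ : Set (Fin n → ℝ)) :
    A σ ⊆ stepFn Δ pool A σ := by
  unfold stepFn; split
  · exact Finset.subset_union_left
  · exact Finset.Subset.refl _

lemma stepFn_pool (Δ : Set (Set (Fin n → ℝ))) (pool : Finset (Fin m → ℤ))
    (A : Set (Fin n → ℝ) → Finset (Fin m → ℤ)) (hA : ∀ σ, A σ ⊆ pool) (σ : Set (Fin n → ℝ)) :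
    stepFn Δ pool A σ ⊆ pool := by
  unfold stepFn; split
  · exact Finset.union_subset (hA σ) (Finset.filter_subset _ _)
  · exact hA σ

lemma stepFn_notmem (Δ : Set (Set (Fin n → ℝ))) (pool : Finset (Fin m → ℤ))
    (A : Set (Fin n → ℝ) → Finset (Fin m → ℤ)) (σ : Set (Fin n → ℝ)) (hσ : σ ∉ Δ) :
    stepFn Δ pool A σ = A σ := by
  unfold stepFn; rw [if_neg hσ]

/-- Existence of a fixed point of an inflationary process with bounded measure. -/
lemma exists_iter_fix {α : Type*} (f : α → α) (μ : α → ℕ) (B : ℕ) (x0 : α)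
    (hμ : ∀ i : ℕ, μ (f^[i] x0) ≤ B)
    (hstrict : ∀ i : ℕ, f (f^[i] x0) ≠ f^[i] x0 → μ (f^[i] x0) < μ (f^[i + 1] x0)) :
    ∃ i, f (f^[i] x0) = f^[i] x0 := by
  by_contra h
  push_neg at h
  have key : ∀ i : ℕ, i ≤ μ (f^[i] x0) := by
    intro i
    induction i with
    | zero => exact Nat.zero_le _
    | succ i ih =>
      have := hstrict i (h i)
      omega
  have h1 := key (B + 1)
  have h2 := hμ (B + 1)
  omega

end MainConstr
section MainConstr2

attribute [local instance] Classical.propDecidable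

variable {n m : ℕ}

lemma coneOf_eq (A : Set (Fin n → ℝ) → Finset (Fin m → ℤ)) (σ : Set (Fin n → ℝ)) :
    coneOf A σ = coneHull (↑((A σ).image toR) : Set (Fin m → ℝ)) := by
  unfold coneOf; rw [Finset.coe_image]

/-- From generator-level absorption-closedness to the cone-level one. -/
lemma closed_imp {Δ : Set (Set (Fin n → ℝ))} {E : Set (Fin n → ℝ) → Finset (Fin m → ℤ)}
    (hclosed : ∀ σ ∈ Δ, ∀ σ' ∈ Δ, ∀ x ∈ E σ, ∀ y ∈ coneOf E σ,
      toR x + y ∈ coneOf E σ' → x ∈ E σ') :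
    ∀ σ ∈ Δ, ∀ σ' ∈ Δ, ∀ x ∈ coneOf E σ, ∀ y ∈ coneOf E σ,
      x + y ∈ coneOf E σ' → x ∈ coneOf E σ' := by
  intro σ hσ σ' hσ' x hx y hy hxy
  rw [coneOf_eq] at hx
  obtain ⟨c, hc, rfl⟩ := mem_coneHull_finset.mp hx
  set S := (E σ).image toR with hS
  have key : ∀ v ∈ S, c v ≠ 0 → v ∈ coneOf E σ' := by
    intro v hv hcv
    have hcvpos : 0 < c v := lt_of_le_of_ne (hc v) (Ne.symm hcv)
    obtain ⟨xg, hxg, rfl⟩ := Finset.mem_image.mp hv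
    -- the rest of the sum
    have hrest : (∑ w ∈ S, c w • w) - c (toR xg) • toR xg ∈ coneOf E σ := by
      have : (∑ w ∈ S, c w • w) - c (toR xg) • toR xg = ∑ w ∈ S.erase (toR xg), c w • w := by
        rw [← Finset.add_sum_erase S (fun w => c w • w) hv]; abel
      rw [this]
      exact (isCone_coneHull _).sum_mem fun w hw =>
        (isCone_coneHull _).smul_mem (hc w)
          (subset_coneHull _ (by
            rw [← Finset.coe_image]
            exact_mod_cast Finset.mem_of_mem_erase hw))
    have hy' : (c (toR xg))⁻¹ • ((∑ w ∈ S, c w • w) - c (toR xg) • toR xg + y)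
        ∈ coneOf E σ :=
      (isCone_coneHull _).smul_mem (inv_nonneg.mpr (hc _))
        ((isCone_coneHull _).add_mem hrest hy)
    have hsum : toR xg + (c (toR xg))⁻¹ • ((∑ w ∈ S, c w • w) - c (toR xg) • toR xg + y)
        = (c (toR xg))⁻¹ • ((∑ w ∈ S, c w • w) + y) := by
      rw [show (∑ w ∈ S, c w • w) + y
          = c (toR xg) • toR xg + ((∑ w ∈ S, c w • w) - c (toR xg) • toR xg + y) by abel]
      rw [smul_add ((c (toR xg))⁻¹) (c (toR xg) • toR xg)]
      rw [inv_smul_smul₀ hcv]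
    have hmem : toR xg + (c (toR xg))⁻¹ • ((∑ w ∈ S, c w • w) - c (toR xg) • toR xg + y)
        ∈ coneOf E σ' := by
      rw [hsum]
      exact (isCone_coneHull _).smul_mem (inv_nonneg.mpr (hc _)) hxy
    have := hclosed σ hσ σ' hσ' xg hxg _ hy' hmem
    rw [coneOf_eq]
    exact subset_coneHull _ (Finset.mem_coe.mpr (Finset.mem_image_of_mem toR this))
  exact (isCone_coneHull _).sum_mem fun v hv => by
    by_cases hcv : c v = 0
    · simp only [hcv, zero_smul]; exact (isCone_coneHull _).zero_mem
    · exact (isCone_coneHull _).smul_mem (hc v) (key v hv hcv)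

end MainConstr2
section MainProof

attribute [local instance] Classical.propDecidable

lemma isCone_of_rat {k : ℕ} {τ : Set (Fin k → ℝ)} (h : IsRatCone τ) : IsCone τ := by
  obtain ⟨s, rfl⟩ := h; exact isCone_coneHull _

lemma isCone_mem_fan {k : ℕ} {Δ' : Set (Set (Fin k → ℝ))} (h : IsFan Δ') {τ : Set (Fin k → ℝ)}
    (hτ : τ ∈ Δ') : IsCone τ := isCone_of_rat (h.1.1.2 τ hτ)

lemma filter_image_toR {m : ℕ} (T : Finset (Fin m → ℤ)) (G : Set (Fin m → ℝ)) :
    (↑((T.image toR).filter (fun v => v ∈ G)) : Set (Fin m → ℝ))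
      = toR '' ↑(T.filter (fun x => toR x ∈ G)) := by
  ext v
  simp only [Finset.coe_filter, Finset.mem_image, Set.mem_setOf_eq, Set.mem_image,
    Finset.mem_coe, Finset.mem_filter]
  constructor
  · rintro ⟨⟨x, hx, rfl⟩, hv⟩
    exact ⟨x, ⟨hx, hv⟩, rfl⟩
  · rintro ⟨x, ⟨hx, hv⟩, rfl⟩
    exact ⟨⟨x, hx, rfl⟩, hv⟩

lemma ratcone_of_face {n m : ℕ} (E : Set (Fin n → ℝ) → Finset (Fin m → ℤ))
    (σ : Set (Fin n → ℝ)) {τ : Set (Fin m → ℝ)} (h : IsFaceOf τ (coneOf E σ)) :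
    ∃ T : Finset (Fin m → ℤ), T ⊆ E σ ∧ τ = coneHull (toR '' ↑T) := by
  refine ⟨(E σ).filter (fun x => toR x ∈ τ), Finset.filter_subset _ _, ?_⟩
  rw [coneOf_eq] at h
  have h2 := h.eq_coneHull_filter
  conv_lhs => rw [h2]
  rw [filter_image_toR]

/-- The main inductive construction. -/
lemma main_ind {n : ℕ} (Δ : Set (Set (Fin n → ℝ))) (hΔ : IsFan Δ)
    (L : Submodule ℤ (Fin n → ℤ)) :
    ∀ m : ℕ, ∀ P : (Fin n → ℤ) →ₗ[ℤ] (Fin m → ℤ),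
    Function.Surjective P → L ≤ LinearMap.ker P →
    (∀ (k : ℕ) (F : (Fin n → ℤ) →ₗ[ℤ] (Fin k → ℤ)) (Δ' : Set (Set (Fin k → ℝ))),
      IsFan Δ' → IsConeMap F Δ Δ' → L ≤ LinearMap.ker F → LinearMap.ker P ≤ LinearMap.ker F) →
    ∃ (m' : ℕ) (P' : (Fin n → ℤ) →ₗ[ℤ] (Fin m' → ℤ)) (Δt : Set (Set (Fin m' → ℝ))),
      IsFan Δt ∧ IsConeMap P' Δ Δt ∧ L ≤ LinearMap.ker P' ∧
      ∀ (k : ℕ) (F : (Fin n → ℤ) →ₗ[ℤ] (Fin k → ℤ)) (Δ' : Set (Set (Fin k → ℝ))),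
        IsFan Δ' → IsConeMap F Δ Δ' → L ≤ LinearMap.ker F →
        ∃! Ft : (Fin m' → ℤ) →ₗ[ℤ] (Fin k → ℤ), IsConeMap Ft Δt Δ' ∧ F = Ft.comp P' := by
  intro m
  induction m using Nat.strong_induction_on with
  | _ m IH =>
  intro P hsurj hLP hker
  -- generators of the cones of Δ
  have hfin : Δ.Finite := hΔ.1.1.1
  have hrat : ∀ σ ∈ Δ, IsRatCone σ := hΔ.1.1.2
  set g : Set (Fin n → ℝ) → Finset (Fin n → ℤ) :=
    fun σ => if h : σ ∈ Δ then (hrat σ h).choose else ∅ with hgdef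
  have hg : ∀ σ ∈ Δ, σ = coneHull (toR '' ↑(g σ)) := by
    intro σ h
    simp only [hgdef, dif_pos h]
    exact (hrat σ h).choose_spec
  set pool : Finset (Fin m → ℤ) := hfin.toFinset.biUnion (fun σ => (g σ).image P) with hpool
  set A0 : Set (Fin n → ℝ) → Finset (Fin m → ℤ) :=
    fun σ => if σ ∈ Δ then (g σ).image P else ∅ with hA0
  have hA0pool : ∀ σ, A0 σ ⊆ pool := by
    intro σ
    simp only [hA0]
    split
    · intro x hx
      rw [hpool]
      refine Finset.mem_biUnion.mpr ⟨σ, ?_, hx⟩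
      rwa [Set.Finite.mem_toFinset]
    · exact Finset.empty_subset _
  set f := stepFn Δ pool with hf
  -- all iterates are pool-valued
  have hiterpool : ∀ i σ, (f^[i] A0) σ ⊆ pool := by
    intro i
    induction i with
    | zero => exact hA0pool
    | succ i ih =>
      rw [Function.iterate_succ_apply']
      exact stepFn_pool Δ pool _ ih
  -- a fixed point of the absorption process exists
  obtain ⟨i0, hfix⟩ : ∃ i, f (f^[i] A0) = f^[i] A0 := by
    apply exists_iter_fix f (fun A => ∑ σ ∈ hfin.toFinset, (A σ).card)
      (hfin.toFinset.card * pool.card) A0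
    · intro i
      calc ∑ σ ∈ hfin.toFinset, ((f^[i] A0) σ).card
          ≤ ∑ _σ ∈ hfin.toFinset, pool.card :=
            Finset.sum_le_sum fun σ _ => Finset.card_le_card (hiterpool i σ)
        _ = hfin.toFinset.card * pool.card := by rw [Finset.sum_const, smul_eq_mul]
    · intro i hne
      rw [Function.iterate_succ_apply']
      have hex : ∃ σ ∈ Δ, (f^[i] A0) σ ⊂ f (f^[i] A0) σ := by
        by_contra hcon
        push_neg at hcon
        apply hne
        funext σ
        by_cases hσ : σ ∈ Δ
        · have hsub := stepFn_mono Δ pool (f^[i] A0) σ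
          by_contra hneq
          exact hcon σ hσ (Finset.ssubset_iff_subset_ne.mpr ⟨hsub, fun h => hneq h.symm⟩)
        · exact stepFn_notmem Δ pool _ σ hσ
      obtain ⟨σ0, hσ0, hss⟩ := hex
      apply Finset.sum_lt_sum
      · intro σ _
        exact Finset.card_le_card (stepFn_mono Δ pool _ σ)
      · exact ⟨σ0, (Set.Finite.mem_toFinset hfin).mpr hσ0, Finset.card_lt_card hss⟩
  set E := f^[i0] A0 with hE
  have hEpool : ∀ σ, E σ ⊆ pool := hiterpool i0
  have hmono2 : ∀ (i : ℕ) σ, A0 σ ⊆ (f^[i] A0) σ := by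
    intro i
    induction i with
    | zero => exact fun σ => Finset.Subset.refl _
    | succ i ih =>
      intro σ
      rw [Function.iterate_succ_apply']
      exact (ih σ).trans (stepFn_mono Δ pool _ σ)
  have hA0E : ∀ σ, A0 σ ⊆ E σ := fun σ => hmono2 i0 σ
  -- base cones
  have hbase : ∀ σ ∈ Δ, extR P '' σ = coneOf A0 σ := by
    intro σ hσ
    unfold coneOf
    simp only [hA0]
    rw [if_pos hσ, Finset.coe_image]
    conv_lhs => rw [hg σ hσ]
    rw [map_coneHull, Set.image_image, Set.image_image]
    exact congrArg coneHull (Set.image_congr fun x _ => extR_toR P x)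
  have hcone : ∀ σ ∈ Δ, extR P '' σ ⊆ coneOf E σ := by
    intro σ hσ
    rw [hbase σ hσ]
    exact coneHull_mono (Set.image_mono (hA0E σ))
  -- the generator-level closedness of the fixed point
  have hclosed : ∀ σ ∈ Δ, ∀ σ' ∈ Δ, ∀ x ∈ E σ, ∀ y ∈ coneOf E σ,
      toR x + y ∈ coneOf E σ' → x ∈ E σ' := by
    intro σ hσ σ' hσ' x hx y hy hxy
    have := congrFun hfix σ'
    rw [hf] at this
    unfold stepFn at this
    rw [if_pos hσ'] at this
    have hmem : x ∈ pool.filter (absorbCond Δ E σ') :=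
      Finset.mem_filter.mpr ⟨hEpool σ hx, ⟨σ, hσ, hx, y, hy, hxy⟩⟩
    have : E σ' ∪ pool.filter (absorbCond Δ E σ') = E σ' := this
    rw [← this]
    exact Finset.mem_union_right _ hmem
  have hclosedC := closed_imp hclosed
  -- intersections of the cones of the fixed point are faces
  have hfaceint : ∀ σ ∈ Δ, ∀ σ' ∈ Δ, IsFaceOf (coneOf E σ ∩ coneOf E σ') (coneOf E σ) := by
    intro σ hσ σ' hσ'
    refine ⟨(isCone_coneHull _).inter (isCone_coneHull _), Set.inter_subset_left, ?_⟩
    intro x hx y hy hxy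
    exact ⟨⟨hx, hclosedC σ hσ σ' hσ' x hx y hy hxy.2⟩,
      hy, by
        have h2 : y + x ∈ coneOf E σ' := by rw [add_comm]; exact hxy.2
        exact hclosedC σ hσ σ' hσ' y hy x hx h2⟩
  -- the key invariant
  have hinv : ∀ (k : ℕ) (Ft : (Fin m → ℤ) →ₗ[ℤ] (Fin k → ℤ)) (Δ' : Set (Set (Fin k → ℝ))),
      IsFan Δ' → IsConeMap (Ft.comp P) Δ Δ' →
      ∀ σ ∈ Δ, ∃ τ ∈ Δ', extR Ft '' coneOf E σ ⊆ τ := by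
    intro k Ft Δ' hΔ' hcm
    suffices h : ∀ i : ℕ, ∀ σ ∈ Δ, ∃ τ ∈ Δ', extR Ft '' coneOf (f^[i] A0) σ ⊆ τ by
      exact h i0
    intro i0
    induction i0 with
    | zero =>
      intro σ hσ
      obtain ⟨τ, hτ, hsub⟩ := hcm σ hσ
      refine ⟨τ, hτ, ?_⟩
      rw [show (f^[0] A0 : Set (Fin n → ℝ) → Finset (Fin m → ℤ)) = A0 from rfl,
        ← hbase σ hσ, ← Set.image_comp]
      rw [extR_comp] at hsub
      exact hsub
    | succ i ihs =>
      intro σ' hσ'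
      obtain ⟨τ', hτ', hsub'⟩ := ihs σ' hσ'
      refine ⟨τ', hτ', ?_⟩
      rw [Function.iterate_succ_apply']
      set A := f^[i] A0 with hA
      have hcone' : IsCone ((extR Ft) ⁻¹' τ') := (isCone_mem_fan hΔ' hτ').preimage _
      have : coneOf (f A) σ' ⊆ (extR Ft) ⁻¹' τ' := by
        apply coneHull_min hcone'
        rintro _ ⟨x, hx, rfl⟩
        rw [Finset.mem_coe, hf] at hx
        unfold stepFn at hx
        rw [if_pos hσ'] at hx
        rcases Finset.mem_union.mp hx with hx | hx
        · exact hsub' ⟨toR x, subset_coneHull _ ⟨x, hx, rfl⟩, rfl⟩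
        · obtain ⟨-, σ, hσ, hxσ, y, hy, hsum⟩ := Finset.mem_filter.mp hx
          obtain ⟨τ, hτ, hsubτ⟩ := ihs σ hσ
          have hu : extR Ft (toR x) ∈ τ :=
            hsubτ ⟨toR x, subset_coneHull _ ⟨x, hxσ, rfl⟩, rfl⟩
          have hw : extR Ft y ∈ τ := hsubτ ⟨y, hy, rfl⟩
          have hsum1 : extR Ft (toR x + y) ∈ τ' := hsub' ⟨toR x + y, hsum, rfl⟩
          have hsum2 : extR Ft (toR x + y) ∈ τ :=
            hsubτ ⟨toR x + y, (isCone_coneHull _).add_mem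
              (subset_coneHull _ ⟨x, hxσ, rfl⟩) hy, rfl⟩
          have hface : IsFaceOf (τ ∩ τ') τ := hΔ'.1.2.2 τ hτ τ' hτ'
          have := hface.2.2 _ hu _ hw (by
            rw [← map_add]
            exact ⟨hsum2, hsum1⟩)
          exact this.1.2
      intro z hz
      obtain ⟨w, hw, rfl⟩ := hz
      exact this hw
  -- case distinction on strict convexity of the cones of the fixed point
  by_cases hsc : ∀ σ ∈ Δ, IsStrictlyConvexCone (coneOf E σ)
  · -- the quotient fan exists at this level
    set Δt : Set (Set (Fin m → ℝ)) := {τ | ∃ σ ∈ Δ, IsFaceOf τ (coneOf E σ)} with hΔt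
    refine ⟨m, P, Δt, ⟨⟨⟨?_, ?_⟩, ?_, ?_⟩, ?_⟩, ?_, hLP, ?_⟩
    · -- finiteness
      apply Set.Finite.subset (Set.Finite.biUnion hfin
        (fun σ _ => (finite_faces ((E σ).image toR)).subset (fun G hG => hG)))
      rintro τ ⟨σ, hσ, hface⟩
      refine Set.mem_biUnion hσ ?_
      rw [← coneOf_eq]
      exact hface
    · -- rationality
      rintro τ ⟨σ, hσ, hface⟩
      obtain ⟨T, -, hT⟩ := ratcone_of_face E σ hface
      exact ⟨T, hT⟩
    · -- closure under faces
      rintro τ ⟨σ, hσ, hface⟩ υ hυ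
      exact ⟨σ, hσ, hυ.trans hface⟩
    · -- intersections are faces
      rintro τ ⟨σ, hσ, hface⟩ τ' ⟨σ', hσ', hface'⟩
      exact face_inter_face hface hface' (hfaceint σ hσ σ' hσ')
    · -- strict convexity
      rintro τ ⟨σ, hσ, hface⟩
      exact hface.strictlyConvex (hsc σ hσ)
    · -- P is a cone map
      intro σ hσ
      exact ⟨coneOf E σ, ⟨σ, hσ, (isCone_coneHull _).faceOf_self⟩, hcone σ hσ⟩
    · -- universal property
      intro k F Δ' hΔ' hcm hLF
      have hkerPF : LinearMap.ker P ≤ LinearMap.ker F := hker k F Δ' hΔ' hcm hLF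
      obtain ⟨Ft, hFt⟩ := exists_factor P hsurj F hkerPF
      have hcm' : IsConeMap (Ft.comp P) Δ Δ' := by rw [← hFt]; exact hcm
      refine ⟨Ft, ⟨?_, hFt⟩, ?_⟩
      · rintro τ ⟨σ, hσ, hface⟩
        obtain ⟨τ0, hτ0, hsub⟩ := hinv k Ft Δ' hΔ' hcm' σ hσ
        exact ⟨τ0, hτ0, (Set.image_mono hface.subset).trans hsub⟩
      · rintro Ft₂ ⟨-, hFt₂⟩
        apply LinearMap.ext
        intro z
        obtain ⟨x, rfl⟩ := hsurj z
        have h1 : F x = Ft₂ (P x) := by rw [hFt₂]; rfl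
        have h2 : F x = Ft (P x) := by rw [hFt]; rfl
        rw [← h1, ← h2]
  · -- some cone is not strictly convex : enlarge the kernel and recurse
    push_neg at hsc
    obtain ⟨σs, hσs, hnsc⟩ := hsc
    have : ∃ x ∈ coneOf E σs, -x ∈ coneOf E σs ∧ x ≠ 0 := by
      by_contra hcon
      push_neg at hcon
      exact hnsc hcon
    obtain ⟨x0, hx0, hnx0, hx0ne⟩ := this
    -- the lineality face
    set W : Set (Fin m → ℝ) := coneOf E σs ∩ (fun z => -z) ⁻¹' coneOf E σs with hW
    have hWface : IsFaceOf W (coneOf E σs) := lineality_face (isCone_coneHull _)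
    have hx0W : x0 ∈ W := ⟨hx0, hnx0⟩
    obtain ⟨T, hTE, hTW⟩ := ratcone_of_face E σs hWface
    -- find a nonzero integral vector in W
    have : ∃ gz ∈ T, toR gz ≠ 0 := by
      by_contra hcon
      push_neg at hcon
      have : W ⊆ {0} := by
        rw [hTW]
        apply coneHull_zero_sub
        rintro _ ⟨x, hx, rfl⟩
        simp [hcon x hx]
      exact hx0ne (this hx0W)
    obtain ⟨gz, hgzT, hgzne⟩ := this
    have hgzW : toR gz ∈ W := by
      rw [hTW]
      exact subset_coneHull _ ⟨gz, Finset.mem_coe.mpr hgzT, rfl⟩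
    -- every admissible map kills gz
    have hkill : ∀ (k : ℕ) (F : (Fin n → ℤ) →ₗ[ℤ] (Fin k → ℤ)) (Δ' : Set (Set (Fin k → ℝ))),
        IsFan Δ' → IsConeMap F Δ Δ' → L ≤ LinearMap.ker F →
        ∀ Ft : (Fin m → ℤ) →ₗ[ℤ] (Fin k → ℤ), F = Ft.comp P → Ft gz = 0 := by
      intro k F Δ' hΔ' hcm hLF Ft hFt
      have hcm' : IsConeMap (Ft.comp P) Δ Δ' := by rw [← hFt]; exact hcm
      obtain ⟨τ, hτ, hsub⟩ := hinv k Ft Δ' hΔ' hcm' σs hσs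
      have hu : extR Ft (toR gz) ∈ τ := hsub ⟨toR gz, hgzW.1, rfl⟩
      have hnu : -(extR Ft (toR gz)) ∈ τ := by
        have : extR Ft (-(toR gz)) ∈ τ := hsub ⟨-(toR gz), hgzW.2, rfl⟩
        rwa [map_neg] at this
      have := hΔ'.2 τ hτ _ hu hnu
      rw [extR_toR] at this
      exact toR_injective (by rw [this, toR_zero])
    -- the saturation of the span of gz
    set Sg : Submodule ℤ (Fin m → ℤ) :=
      { carrier := {w | ∃ c : ℤ, c ≠ 0 ∧ c • w ∈ Submodule.span ℤ {gz}},
        add_mem' := by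
          rintro a b ⟨c1, hc1, hs1⟩ ⟨c2, hc2, hs2⟩
          refine ⟨c1 * c2, mul_ne_zero hc1 hc2, ?_⟩
          have : (c1 * c2) • (a + b) = c2 • (c1 • a) + c1 • (c2 • b) := by
            rw [smul_add]
            rw [smul_smul, smul_smul]
            ring_nf
          rw [this]
          exact Submodule.add_mem _ (Submodule.smul_mem _ _ hs1) (Submodule.smul_mem _ _ hs2)
        zero_mem' := ⟨1, one_ne_zero, by simp⟩
        smul_mem' := by
          rintro a w ⟨c, hc, hs⟩
          refine ⟨c, hc, ?_⟩
          have : c • (a • w) = a • (c • w) := by rw [smul_smul, smul_smul, mul_comm]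
          rw [this]
          exact Submodule.smul_mem _ _ hs } with hSg
    have hSgsat : ∀ (v : Fin m → ℤ) (c : ℤ), c ≠ 0 → c • v ∈ Sg → v ∈ Sg := by
      rintro v c hc ⟨c1, hc1, hs1⟩
      exact ⟨c1 * c, mul_ne_zero hc1 hc, by rwa [mul_smul]⟩
    have hgzSg : gz ∈ Sg := ⟨1, one_ne_zero, by simp [Submodule.mem_span_singleton_self]⟩
    have hSgne : Sg ≠ ⊥ := by
      intro hbot
      rw [hbot] at hgzSg
      exact (fun h => hgzne (by rw [h, toR_zero])) (Submodule.mem_bot ℤ |>.mp hgzSg)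
    obtain ⟨m2, P2, hs2, hker2, hlt2⟩ := exists_quot_sat Sg hSgsat
    have hm2 : m2 < m := hlt2 hSgne
    apply IH m2 hm2 (P2.comp P) (hs2.comp hsurj)
    · intro x hx
      have : P x = 0 := hLP hx
      simp [LinearMap.mem_ker, LinearMap.comp_apply, this]
    · intro k F Δ' hΔ' hcm hLF x hx
      have hPx : P x ∈ Sg := by
        rw [← hker2]
        simpa [LinearMap.mem_ker, LinearMap.comp_apply] using hx
      obtain ⟨c, hc, hcs⟩ := hPx
      obtain ⟨d, hd⟩ := Submodule.mem_span_singleton.mp hcs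
      have hkerPF : LinearMap.ker P ≤ LinearMap.ker F := hker k F Δ' hΔ' hcm hLF
      obtain ⟨Ft, hFt⟩ := exists_factor P hsurj F hkerPF
      have hFtgz : Ft gz = 0 := hkill k F Δ' hΔ' hcm hLF Ft hFt
      have : c • F x = 0 := by
        rw [hFt]
        simp only [LinearMap.comp_apply]
        rw [← map_smul, ← hd, map_smul, hFtgz, smul_zero]
      rw [LinearMap.mem_ker]
      rcases smul_eq_zero.mp this with h | h
      · exact absurd (by exact_mod_cast h) hc
      · exact h

end MainProof

/-- Let `Δ` be a fan in a lattice `N` and `L ⊆ N` a primitive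
sublattice. Then there exists a map of fans `P : (N,Δ) → (Ñ,Δ̃)` with
`L ⊆ ker P` satisfying the universal property: every map of fans
`F : (N,Δ) → (N',Δ')` with `L ⊆ ker F` factors uniquely through `P`. -/
theorem toric_quotient_exists {n : ℕ} (Δ : Set (Set (Fin n → ℝ))) (hΔ : IsFan Δ)
    (L : Submodule ℤ (Fin n → ℤ)) (hL : IsPrimitive L) :
    ∃ (m : ℕ) (P : (Fin n → ℤ) →ₗ[ℤ] (Fin m → ℤ)) (Δt : Set (Set (Fin m → ℝ))),
      IsFan Δt ∧ IsConeMap P Δ Δt ∧ L ≤ LinearMap.ker P ∧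
      ∀ (k : ℕ) (F : (Fin n → ℤ) →ₗ[ℤ] (Fin k → ℤ)) (Δ' : Set (Set (Fin k → ℝ))),
        IsFan Δ' → IsConeMap F Δ Δ' → L ≤ LinearMap.ker F →
        ∃! Ft : (Fin m → ℤ) →ₗ[ℤ] (Fin k → ℤ), IsConeMap Ft Δt Δ' ∧ F = Ft.comp P := by
  obtain ⟨m0, P0, hs0, hk0, -⟩ := exists_quot_sat L (fun v c hc hm => hL v c hc hm)
  obtain ⟨m', P', Δt, h1, h2, h3, h4⟩ :=
    main_ind Δ hΔ L m0 P0 hs0 (le_of_eq hk0.symm)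
      (fun k F Δ' _ _ h3 => by rw [hk0]; exact h3)
  exact ⟨m', P', Δt, h1, h2, h3, h4⟩
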